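/- Radial long-range ambiguity of the phase-insensitive distance: for every r > 0 and every real θ, s*(h(r, θ), h(r + c/Δf, θ)) = 1, i.e. the PI distance d*(h(r, θ), h(r + c/Δf, θ)) = √(2 − 2·s*) equals 0, even though the two locations differ by c/Δf in range. (Hence any area of radial size exceeding c/Δf cannot be weakly identifiable by the PI distance.) -/

import Mathlib

open Real

/-- Subcarrier frequencies: `f_m = f_c + (m - 1 - (N_s - 1)/2) · Δf` for `m = 1,…,N_s`,
indexed here by `m : Fin Ns` (so `(m : ℕ) = m - 1`). -/
noncomputable def subcarrier (fc Δf : ℝ) (Ns : ℕ) (m : Fin Ns) : ℝ :=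
  fc + (((m : ℕ) : ℝ) - ((Ns : ℝ) - 1) / 2) * Δf

/-- Frequency signature vector: `f(r)_m = (1/√N_s) · exp(−2πi·(r/c)·(f_m − f_c))`. -/
noncomputable def freqSig (c fc Δf : ℝ) (Ns : ℕ) (r : ℝ) (m : Fin Ns) : ℂ :=
  ((1 / Real.sqrt Ns : ℝ) : ℂ) *
    Complex.exp (((-(2 * π * (r / c) * (subcarrier fc Δf Ns m - fc)) : ℝ) : ℂ) * Complex.I)

/-- Generic 2D steering vector: `a(θ)_n = (1/√N_a) · exp(2πi·(p_n · u(θ))/λ)`, where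
`u(θ) = (cos θ, sin θ)` and `p_n ∈ ℝ²` is the `n`-th antenna position. -/
noncomputable def steer (lam : ℝ) (Na : ℕ) (p : Fin Na → ℝ × ℝ) (θ : ℝ) (n : Fin Na) : ℂ :=
  ((1 / Real.sqrt Na : ℝ) : ℂ) *
    Complex.exp (((2 * π / lam * ((p n).1 * Real.cos θ + (p n).2 * Real.sin θ) : ℝ) : ℂ)
      * Complex.I)

/-- LoS channel vector at polar coordinates `(r, θ)`:
`h(r,θ)_{(m,n)} = (√(N_aN_s)/r) · exp(−2πi·r/λ) · f(r)_m · a(θ)_n`. -/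
noncomputable def chan (c fc Δf lam : ℝ) (Ns Na : ℕ) (p : Fin Na → ℝ × ℝ)
    (r θ : ℝ) (k : Fin Ns × Fin Na) : ℂ :=
  ((Real.sqrt ((Na : ℝ) * (Ns : ℝ)) / r : ℝ) : ℂ) *
    Complex.exp (((-(2 * π * r / lam) : ℝ) : ℂ) * Complex.I) *
    freqSig c fc Δf Ns r k.1 * steer lam Na p θ k.2

/-- Radial similarity term `f̄(r_i, r_j) = |⟨f(r_i), f(r_j)⟩|`. -/
noncomputable def fbar (c fc Δf : ℝ) (Ns : ℕ) (ri rj : ℝ) : ℝ :=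
  ‖∑ m : Fin Ns, (starRingEnd ℂ) (freqSig c fc Δf Ns ri m) * freqSig c fc Δf Ns rj m‖

/-- Angular similarity term `ā(θ_i, θ_j) = |⟨a(θ_i), a(θ_j)⟩|`. -/
noncomputable def abar (lam : ℝ) (Na : ℕ) (p : Fin Na → ℝ × ℝ) (θi θj : ℝ) : ℝ :=
  ‖∑ n : Fin Na, (starRingEnd ℂ) (steer lam Na p θi n) * steer lam Na p θj n‖

/-- Phase-insensitive similarity
`s*(h₁, h₂) = |Σ_k conj((h₁)_k)·(h₂)_k| / (‖h₁‖·‖h₂‖)` (Euclidean norms). -/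
noncomputable def simPI {ι : Type*} [Fintype ι] (h1 h2 : ι → ℂ) : ℝ :=
  ‖∑ k, (starRingEnd ℂ) (h1 k) * h2 k‖ /
    (Real.sqrt (∑ k, ‖h1 k‖ ^ 2) * Real.sqrt (∑ k, ‖h2 k‖ ^ 2))

/-!
A range shift of `c / Δf` changes the phase of subcarrier `m` by `2π m` plus an offset that is
the same for all subcarriers, and changes the path loss and carrier phase by a nonzero scalar.
Hence `h(r + c/Δf, θ)` is a nonzero multiple of `h(r, θ)`, and the Cauchy–Schwarz inequality
behind `s* ≤ 1` is an equality for collinear vectors.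
-/

open scoped InnerProductSpace

lemma simPI_ofLp {ι : Type*} [Fintype ι] (x y : EuclideanSpace ℂ ι) :
    simPI x.ofLp y.ofLp = ‖⟪x, y⟫_ℂ / (‖x‖ * ‖y‖ : ℂ)‖ := by
  rw [norm_div, ← Complex.ofReal_mul, Complex.norm_of_nonneg (by positivity),
    EuclideanSpace.norm_eq, EuclideanSpace.norm_eq, PiLp.inner_apply]
  simp [simPI, mul_comm]

lemma simPI_smul_self {ι : Type*} [Fintype ι] {h : ι → ℂ} (hh : h ≠ 0) {w : ℂ} (hw : w ≠ 0) :
    simPI h (w • h) = 1 := by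
  rw [← WithLp.ofLp_toLp 2 h, ← WithLp.ofLp_toLp 2 (w • h), simPI_ofLp]
  exact (norm_inner_div_norm_mul_norm_eq_one_iff _ _).2 ⟨by simpa using hh, w, hw, rfl⟩

/-- The common offset `π (N_s - 1)` comes from centring the subcarrier grid at `f_c`. -/
lemma freqSig_add_div (c fc Δf : ℝ) (hc : c ≠ 0) (hΔf : Δf ≠ 0) (Ns : ℕ) (r : ℝ) :
    freqSig c fc Δf Ns (r + c / Δf)
      = Complex.exp ((π * ((Ns : ℝ) - 1) : ℝ) * Complex.I) • freqSig c fc Δf Ns r := by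
  funext m
  have hphase : ((-(2 * π * ((r + c / Δf) / c) * (subcarrier fc Δf Ns m - fc)) : ℝ) : ℂ)
        * Complex.I
      = (π * ((Ns : ℝ) - 1) : ℝ) * Complex.I
        + ((-(2 * π * (r / c) * (subcarrier fc Δf Ns m - fc)) : ℝ) : ℂ) * Complex.I
        + (-(m : ℕ) : ℤ) * (2 * π * Complex.I) := by
    have hc' : (c : ℂ) ≠ 0 := by exact_mod_cast hc
    have hΔf' : (Δf : ℂ) ≠ 0 := by exact_mod_cast hΔf
    simp only [subcarrier]
    push_cast
    field_simp
    ring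
  rw [Pi.smul_apply, smul_eq_mul, freqSig, freqSig, hphase, Complex.exp_add, Complex.exp_add,
    Complex.exp_int_mul_two_pi_mul_I]
  ring

lemma chan_add_div_eq_smul (c fc Δf lam : ℝ) (hc : c ≠ 0) (hΔf : Δf ≠ 0) (Ns Na : ℕ)
    (p : Fin Na → ℝ × ℝ) {r : ℝ} (hr : r ≠ 0) (hr' : r + c / Δf ≠ 0) (θ : ℝ) :
    ∃ w : ℂ, w ≠ 0 ∧
      chan c fc Δf lam Ns Na p (r + c / Δf) θ = w • chan c fc Δf lam Ns Na p r θ := by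
  refine ⟨(r / (r + c / Δf) : ℝ) * Complex.exp ((-(2 * π * (c / Δf) / lam) : ℝ) * Complex.I) *
      Complex.exp ((π * ((Ns : ℝ) - 1) : ℝ) * Complex.I), ?_, ?_⟩
  · exact mul_ne_zero (mul_ne_zero (Complex.ofReal_ne_zero.2 (div_ne_zero hr hr'))
      (Complex.exp_ne_zero _)) (Complex.exp_ne_zero _)
  · funext k
    have hamp : (Real.sqrt ((Na : ℝ) * Ns) / (r + c / Δf) : ℝ)
        = r / (r + c / Δf) * (Real.sqrt ((Na : ℝ) * Ns) / r) := by
      field_simp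
    have hphase : ((-(2 * π * (r + c / Δf) / lam) : ℝ) : ℂ) * Complex.I
        = ((-(2 * π * (c / Δf) / lam) : ℝ) : ℂ) * Complex.I
          + ((-(2 * π * r / lam) : ℝ) : ℂ) * Complex.I := by
      push_cast
      ring
    rw [Pi.smul_apply, smul_eq_mul, chan, chan, freqSig_add_div c fc Δf hc hΔf, Pi.smul_apply,
      smul_eq_mul, hamp, hphase, Complex.exp_add, Complex.ofReal_mul]
    ring

lemma chan_apply_ne_zero (c fc Δf lam : ℝ) (Ns Na : ℕ) (p : Fin Na → ℝ × ℝ) {r : ℝ}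
    (hr : r ≠ 0) (θ : ℝ) (k : Fin Ns × Fin Na) : chan c fc Δf lam Ns Na p r θ k ≠ 0 := by
  have hNs : (0 : ℝ) < Ns := by exact_mod_cast k.1.pos
  have hNa : (0 : ℝ) < Na := by exact_mod_cast k.2.pos
  simp [chan, freqSig, steer, hr, Complex.exp_ne_zero, hNs.ne', hNa.ne']

theorem radial_long_range_ambiguity_general (c fc Δf lam : ℝ) (hc : 0 < c) (hΔf : 0 < Δf)
    (Ns Na : ℕ) (hNs : 1 ≤ Ns) (hNa : 1 ≤ Na) (p : Fin Na → ℝ × ℝ)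
    (r θ : ℝ) (hr : 0 < r) :
    simPI (chan c fc Δf lam Ns Na p r θ) (chan c fc Δf lam Ns Na p (r + c / Δf) θ) = 1 ∧
    Real.sqrt (2 - 2 *
      simPI (chan c fc Δf lam Ns Na p r θ) (chan c fc Δf lam Ns Na p (r + c / Δf) θ)) = 0 := by
  obtain ⟨w, hw, hshift⟩ := chan_add_div_eq_smul c fc Δf lam hc.ne' hΔf.ne' Ns Na p hr.ne'
    (by positivity) θ
  have hchan : chan c fc Δf lam Ns Na p r θ ≠ 0 := fun h =>
    chan_apply_ne_zero c fc Δf lam Ns Na p hr.ne' θ (⟨0, hNs⟩, ⟨0, hNa⟩) (congrFun h _)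
  have hsim : simPI (chan c fc Δf lam Ns Na p r θ)
      (chan c fc Δf lam Ns Na p (r + c / Δf) θ) = 1 := by
    rw [hshift]
    exact simPI_smul_self hchan hw
  refine ⟨hsim, ?_⟩
  rw [hsim]
  norm_num

/-- radial long-range ambiguity of the PI distance: for every `r > 0`
and every `θ`, `s*(h(r,θ), h(r + c/Δf, θ)) = 1`, i.e. the PI distance
`d* = √(2 − 2·s*)` vanishes, although the two locations differ by `c/Δf` in range. -/
theorem radial_long_range_ambiguity (c fc Δf lam : ℝ) (hc : 0 < c) (hΔf : 0 < Δf)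
    (hlam : 0 < lam) (Ns Na : ℕ) (hNs : 1 ≤ Ns) (hNa : 1 ≤ Na) (p : Fin Na → ℝ × ℝ)
    (r θ : ℝ) (hr : 0 < r) :
    simPI (chan c fc Δf lam Ns Na p r θ) (chan c fc Δf lam Ns Na p (r + c / Δf) θ) = 1 ∧
    Real.sqrt (2 - 2 *
      simPI (chan c fc Δf lam Ns Na p r θ) (chan c fc Δf lam Ns Na p (r + c / Δf) θ)) = 0 :=
  radial_long_range_ambiguity_general c fc Δf lam hc hΔf Ns Na hNs hNa p r θ hr
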